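/- For all integers N ≥ 1, k ≥ 1, every i ∈ {1,…,N} and every integer v with 0 ≤ v ≤ k/2, in the Pólya urn model with N colours and k draws one has the pointwise lower bound P(X_i = v) ≥ ((N−1)/(k+N))·exp(−2·N·v/k). -/

import Mathlib

set_option linter.unusedTactic false

attribute [local instance] Classical.propDecidable

def urnSet (N k : ℕ) : Finset (Fin N → ℕ) :=
  (Fintype.piFinset fun _ => Finset.range (k + 1)).filter fun v => ∑ i, v i = k

noncomputable def urnProb (N k : ℕ) (p : (Fin N → ℕ) → Prop) : ℝ :=
  ((urnSet N k).filter p).card / (urnSet N k).card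

lemma mem_urnSet {N k : ℕ} {x : Fin N → ℕ} : x ∈ urnSet N k ↔ ∑ j, x j = k := by
  simp only [urnSet, Finset.mem_filter, Fintype.mem_piFinset, Finset.mem_range]
  constructor
  · exact fun h => h.2
  · intro h
    refine ⟨fun j => ?_, h⟩
    have : x j ≤ ∑ j, x j := Finset.single_le_sum (fun _ _ => Nat.zero_le _) (Finset.mem_univ j)
    omega

lemma card_filter_urn (N k : ℕ) (i : Fin (N + 1)) (v : ℕ) (hvk : v ≤ k) :
    ((urnSet (N + 1) k).filter (fun x => x i = v)).card = (urnSet N (k - v)).card := by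
  refine Finset.card_nbij' (fun x => fun j => x (i.succAbove j)) (fun y => i.insertNth v y)
    ?_ ?_ ?_ ?_
  · intro x hx
    simp only [Finset.mem_coe, Finset.mem_filter, mem_urnSet] at hx
    rw [Finset.mem_coe, mem_urnSet]
    beta_reduce
    have := Fin.sum_univ_succAbove x i
    omega
  · intro y hy
    rw [Finset.mem_coe, mem_urnSet] at hy
    simp only [Finset.mem_coe, Finset.mem_filter, mem_urnSet]
    beta_reduce
    constructor
    · rw [Fin.sum_univ_succAbove (i.insertNth v y) i]
      simp only [Fin.insertNth_apply_same, Fin.insertNth_apply_succAbove]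
      omega
    · simp [Fin.insertNth_apply_same]
  · intro x hx
    simp only [Finset.mem_coe, Finset.mem_filter] at hx
    beta_reduce
    funext j
    by_cases hj : j = i
    · subst hj; simp [Fin.insertNth_apply_same, hx.2]
    · obtain ⟨j', rfl⟩ := Fin.exists_succAbove_eq (Ne.symm (Ne.symm hj))
      simp [Fin.insertNth_apply_succAbove]
  · intro y hy
    beta_reduce
    funext j
    simp [Fin.insertNth_apply_succAbove]

lemma sum_multichoose (N k : ℕ) :
    ∑ j ∈ Finset.range (k + 1), Nat.multichoose N (k - j) = Nat.multichoose (N + 1) k := by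
  induction k with
  | zero => simp [Nat.multichoose_zero_right]
  | succ k ih =>
    rw [Finset.sum_range_succ']
    simp only [Nat.succ_sub_succ]
    rw [ih, Nat.sub_zero, Nat.multichoose_succ_succ, Nat.add_comm]

lemma card_urnSet (N k : ℕ) : (urnSet N k).card = Nat.multichoose N k := by
  induction N generalizing k with
  | zero =>
    cases k with
    | zero =>
      rw [Nat.multichoose_zero_right]
      rw [Finset.card_eq_one]
      exact ⟨fun j => j.elim0, by
        ext x
        simp only [mem_urnSet, Finset.mem_singleton, Finset.univ_eq_empty, Finset.sum_empty,
          true_iff]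
        exact Subsingleton.elim _ _⟩
    | succ k =>
      rw [Nat.multichoose_zero_succ, Finset.card_eq_zero]
      ext x
      simp [mem_urnSet]
  | succ N ih =>
    rw [← sum_multichoose]
    rw [Finset.card_eq_sum_card_fiberwise (f := fun x => x 0) (t := Finset.range (k + 1))]
    · apply Finset.sum_congr rfl
      intro j hj
      rw [Finset.mem_range] at hj
      have hjk : j ≤ k := by omega
      have := card_filter_urn N k 0 j hjk
      rw [← ih (k - j)]
      exact this
    · intro x hx
      rw [Finset.mem_coe, mem_urnSet] at hx
      rw [Finset.mem_coe, Finset.mem_range]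
      beta_reduce
      have : x 0 ≤ ∑ j, x j := Finset.single_le_sum (fun _ _ => Nat.zero_le _) (Finset.mem_univ _)
      omega

lemma choose_prod (m s : ℕ) :
    (m + s).choose m * m.factorial = ∏ j ∈ Finset.range m, (s + 1 + j) := by
  induction m with
  | zero => simp
  | succ m ih =>
    rw [Finset.prod_range_succ, ← ih]
    have h := Nat.add_one_mul_choose_eq (m + s) m
    have : (m + 1 + s) = (m + s) + 1 := by omega
    rw [this]
    rw [Nat.factorial_succ]
    calc (m + s + 1).choose (m + 1) * ((m + 1) * m.factorial)
        = ((m + s + 1).choose (m + 1) * (m + 1)) * m.factorial := by ring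
      _ = ((m + s + 1) * (m + s).choose m) * m.factorial := by rw [← h]
      _ = (m + s).choose m * m.factorial * (s + 1 + m) := by ring

lemma exp_le_one_sub {x : ℝ} (hx0 : 0 ≤ x) (hx2 : x ≤ 1 / 2) :
    Real.exp (-(2 * x)) ≤ 1 - x := by
  have h1 : 1 + 2 * x ≤ Real.exp (2 * x) := by
    have := Real.add_one_le_exp (2 * x); linarith
  have hpos : (0 : ℝ) < 1 + 2 * x := by linarith
  have h2 : Real.exp (-(2 * x)) = 1 / Real.exp (2 * x) := by
    rw [Real.exp_neg]; ring
  rw [h2]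
  have h3 : 1 / Real.exp (2 * x) ≤ 1 / (1 + 2 * x) :=
    one_div_le_one_div_of_le hpos h1
  have h4 : 1 / (1 + 2 * x) ≤ 1 - x := by
    rw [div_le_iff₀ hpos]; nlinarith
  linarith

theorem polya_pointwise_lower_bound (N k : ℕ) (hN : 1 ≤ N) (hk : 1 ≤ k) (i : Fin N)
    (v : ℕ) (hv : (v : ℝ) ≤ (k : ℝ) / 2) :
    ((N : ℝ) - 1) / ((k : ℝ) + N) * Real.exp (-(2 * (N : ℝ) * v) / k) ≤
      urnProb N k (fun x => x i = v) := by
  have hk0 : (0 : ℝ) < k := by exact_mod_cast hk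
  have hv0 : (0 : ℝ) ≤ v := Nat.cast_nonneg v
  have hvk : v ≤ k := by
    have : (v : ℝ) ≤ (k : ℝ) := by linarith
    exact_mod_cast this
  rcases Nat.lt_or_ge N 2 with h1 | h2
  · -- N = 1 : left side is zero
    have hN1 : N = 1 := by omega
    subst hN1
    have he : ((1 : ℕ) : ℝ) - 1 = 0 := by norm_num
    rw [he, zero_div, zero_mul]
    unfold urnProb
    positivity
  · -- N = m + 2
    obtain ⟨m, rfl⟩ : ∃ m, N = m + 2 := ⟨N - 2, by omega⟩
    set s := k - v with hs_def
    have hs : (s : ℝ) = (k : ℝ) - v := by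
      rw [hs_def, Nat.cast_sub hvk]
    -- cardinalities
    have hden : ((urnSet (m + 2) k).card : ℝ) = ((m + k + 1).choose (m + 1) : ℝ) := by
      rw [card_urnSet, Nat.multichoose_eq]
      have h1 : m + 2 + k - 1 = m + k + 1 := by omega
      rw [h1]
      exact_mod_cast congrArg (Nat.cast (R := ℝ))
        (Nat.choose_symm_of_eq_add (show m + k + 1 = k + (m + 1) by omega))
    have hnum : (((urnSet (m + 2) k).filter (fun x => x i = v)).card : ℝ)
        = ((m + s).choose m : ℝ) := by
      rw [card_filter_urn (m + 1) k i v hvk, card_urnSet, Nat.multichoose_eq]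
      have h1 : m + 1 + s - 1 = m + s := by omega
      rw [h1]
      exact_mod_cast congrArg (Nat.cast (R := ℝ))
        (Nat.choose_symm_of_eq_add (show m + s = s + m by omega))
    unfold urnProb
    rw [Finset.filter_congr_decidable, hnum, hden]
    -- product formulas
    have hF : (0 : ℝ) < (m.factorial : ℝ) := by
      exact_mod_cast m.factorial_pos
    set F := (m.factorial : ℝ)
    set Q := ∏ j ∈ Finset.range m, ((k : ℝ) + 1 + j) with hQ_def
    have hQpos : 0 < Q := Finset.prod_pos fun j _ => by positivity
    set P1 := ∏ j ∈ Finset.range m, ((s : ℝ) + 1 + j) with hP1_def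
    have hA : ((m + s).choose m : ℝ) * F = P1 := by
      have := congrArg (Nat.cast (R := ℝ)) (choose_prod m s)
      push_cast at this
      rw [hP1_def]; exact this
    have hB : ((m + k + 1).choose (m + 1) : ℝ) * (((m : ℝ) + 1) * F)
        = Q * ((k : ℝ) + 1 + m) := by
      have := congrArg (Nat.cast (R := ℝ)) (choose_prod (m + 1) k)
      push_cast [Nat.factorial_succ] at this
      rw [Finset.prod_range_succ] at this
      have harg : (m + 1 + k).choose (m + 1) = (m + k + 1).choose (m + 1) := by
        congr 1; omega
      rw [harg] at this
      rw [hQ_def]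
      calc ((m + k + 1).choose (m + 1) : ℝ) * (((m : ℝ) + 1) * F)
          = ((m + k + 1).choose (m + 1) : ℝ) * (((m : ℝ) + 1) * (m.factorial : ℝ)) := rfl
        _ = Q * ((k : ℝ) + 1 + m) := by rw [this, hQ_def]
    set Pnum := ((m + s).choose m : ℝ) with hPnum_def
    set Pden := ((m + k + 1).choose (m + 1) : ℝ) with hPden_def
    have hPden0 : (0 : ℝ) < Pden := by
      rw [hPden_def]
      exact_mod_cast Nat.choose_pos (by omega)
    -- the exponential constant
    set c := Real.exp (-(2 * (v : ℝ)) / k) with hc_def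
    have hc0 : 0 < c := Real.exp_pos _
    have hx2 : (v : ℝ) / k ≤ 1 / 2 := by
      rw [div_le_div_iff₀ hk0 (by norm_num : (0:ℝ) < 2)]; linarith
    have hcle : c ≤ 1 - (v : ℝ) / k := by
      rw [hc_def]
      have harg : -(2 * (v : ℝ)) / k = -(2 * ((v : ℝ) / k)) := by ring
      rw [harg]
      exact exp_le_one_sub (by positivity) hx2
    -- product bound
    have hprod : c ^ m * Q ≤ P1 := by
      have : c ^ m * Q = ∏ j ∈ Finset.range m, c * ((k : ℝ) + 1 + j) := by
        rw [Finset.prod_mul_distrib, Finset.prod_const, Finset.card_range, hQ_def]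
      rw [this, hP1_def]
      apply Finset.prod_le_prod
      · intro j _; positivity
      · intro j hj
        have hfac : (0 : ℝ) ≤ (j : ℝ) + 1 := by positivity
        have step : c * ((k : ℝ) + 1 + j) ≤ (1 - (v : ℝ) / k) * ((k : ℝ) + 1 + j) := by
          apply mul_le_mul_of_nonneg_right hcle (by positivity)
        have step2 : (1 - (v : ℝ) / k) * ((k : ℝ) + 1 + j) ≤ (s : ℝ) + 1 + j := by
          rw [hs]
          have hexp : (1 - (v : ℝ) / k) * ((k : ℝ) + 1 + j)
              = (k : ℝ) + 1 + j - (v : ℝ) - (v : ℝ) * (1 + j) / k := by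
            field_simp; ring
          rw [hexp]
          have : 0 ≤ (v : ℝ) * (1 + j) / k := by positivity
          linarith
        linarith
    -- explicit formulas
    have hPnum : Pnum = P1 / F := by
      rw [eq_div_iff hF.ne']; exact hA
    have hPden : Pden = Q * ((k : ℝ) + 1 + m) / (((m : ℝ) + 1) * F) := by
      rw [eq_div_iff (by positivity : (((m : ℝ) + 1) * F) ≠ 0)]; exact hB
    have hratio : Pnum / Pden = P1 * ((m : ℝ) + 1) / (Q * ((k : ℝ) + 1 + m)) := by
      rw [hPnum, hPden]
      field_simp
    -- step 1 : (m+1)/(k+m+1) * c^m ≤ Pnum / Pden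
    have step1 : ((m : ℝ) + 1) / ((k : ℝ) + m + 1) * c ^ m ≤ Pnum / Pden := by
      rw [hratio, div_mul_eq_mul_div, div_le_div_iff₀ (by positivity) (by positivity)]
      have hmul := mul_le_mul_of_nonneg_right hprod
        (by positivity : (0 : ℝ) ≤ ((m : ℝ) + 1) * ((k : ℝ) + m + 1))
      nlinarith [hmul]
    -- step 2 : target ≤ (m+1)/(k+m+1) * c^m
    have step2 : (((m : ℝ) + 2) - 1) / ((k : ℝ) + ((m : ℝ) + 2))
        * Real.exp (-(2 * ((m : ℝ) + 2) * v) / k)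
        ≤ ((m : ℝ) + 1) / ((k : ℝ) + m + 1) * c ^ m := by
      have hcm : c ^ m = Real.exp ((m : ℝ) * (-(2 * (v : ℝ)) / k)) := by
        rw [hc_def, ← Real.exp_nat_mul]
      rw [hcm]
      have e1 : (((m : ℝ) + 2) - 1) = (m : ℝ) + 1 := by ring
      rw [e1]
      apply mul_le_mul
      · apply div_le_div_of_nonneg_left (by positivity) (by positivity)
        linarith
      · apply Real.exp_le_exp.mpr
        have hd : (m : ℝ) * (-(2 * (v : ℝ)) / k) - (-(2 * ((m : ℝ) + 2) * v) / k)
            = 4 * (v : ℝ) / k := by ring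
        have : 0 ≤ 4 * (v : ℝ) / k := by positivity
        linarith
      · positivity
      · positivity
    have goalcast : (((m + 2 : ℕ) : ℝ) - 1) / ((k : ℝ) + ((m + 2 : ℕ) : ℝ))
        * Real.exp (-(2 * ((m + 2 : ℕ) : ℝ) * v) / k)
        = (((m : ℝ) + 2) - 1) / ((k : ℝ) + ((m : ℝ) + 2))
        * Real.exp (-(2 * ((m : ℝ) + 2) * v) / k) := by
      push_cast; ring_nf
    calc (((m + 2 : ℕ) : ℝ) - 1) / ((k : ℝ) + ((m + 2 : ℕ) : ℝ))
        * Real.exp (-(2 * ((m + 2 : ℕ) : ℝ) * v) / k)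
        = (((m : ℝ) + 2) - 1) / ((k : ℝ) + ((m : ℝ) + 2))
          * Real.exp (-(2 * ((m : ℝ) + 2) * v) / k) := goalcast
      _ ≤ ((m : ℝ) + 1) / ((k : ℝ) + m + 1) * c ^ m := step2
      _ ≤ Pnum / Pden := step1
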